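/- Let S = U + V be a partition of a finite set into disjoint subsets. For matroids P on U, Q on V, and M on S, one has φ_U(M) = P □ Q if and only if P ⊕ Q ≤ M ≤ P □ Q in the rank-preserving weak order on matroids on S, where φ_U(M) = M|U □ M/U. -/

import Mathlib

/-!
Both `P ⊕ Q` and `P □ Q` restrict to `P` on `U` and contract to `Q`: each has every union of a
base of `P` and a base of `Q` as a base, and each of its bases meets `U` in a `P`-independent set
and `V` in a `Q`-spanning set. Independence and spanning are monotone along the weak order, so a
matroid `M` squeezed between them also has `M|U = P` and `M/U = Q`, that is `φ_U(M) = P □ Q`.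
Conversely, if `φ_U(M) = P □ Q` then `P = M|U` and `Q = M/U`. A basis of `U` together with a base
of `M/U` is a base of `M`; this gives `M|U ⊕ M/U ≤ M` and `ρ(M|U) + ρ(M/U) = ρ(M)`, and the rank
identity is what makes every base of `M` a base of `M|U □ M/U`.
-/

open Matroid Set

variable {α : Type*}

/-- The contraction `M / C` of a matroid by a set, defined as the dual of the
deletion (restriction to the complement) of the dual. Its ground set is `M.E \ C`. -/
def Matroid.con (M : Matroid α) (C : Set α) : Matroid α := (M✶ ↾ (M.E \ C))✶

/-- The rank `ρ(M)` of a matroid (as a value in `ℕ∞`): the common cardinality of its bases. -/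
noncomputable def Matroid.erank (M : Matroid α) : ℕ∞ := ⨆ B ∈ {B | M.IsBase B}, B.encard

/-- The rank function `ρ_M(X)` of a matroid: the rank of the restriction to `X`. -/
noncomputable def Matroid.rnk (M : Matroid α) (X : Set α) : ℕ∞ := (M ↾ X).erank

/-- `IsFreeProduct M N P` says that `P` is the free product `M □ N`: its ground set is
`M.E ∪ N.E`, and its bases are exactly the sets `B ⊆ M.E ∪ N.E` of cardinality
`ρ(M) + ρ(N)` such that `B ∩ M.E` is independent in `M` and `B ∩ N.E` spans `N`. -/
def IsFreeProduct (M N P : Matroid α) : Prop :=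
  P.E = M.E ∪ N.E ∧ ∀ B : Set α,
    (P.IsBase B ↔ B ⊆ M.E ∪ N.E ∧ B.encard = M.erank + N.erank ∧
      M.Indep (B ∩ M.E) ∧ N.Spanning (B ∩ N.E))

/-- The rank-preserving weak order on matroids: `M ≤ N` iff `M` and `N` have the same
ground set and every base of `M` is a base of `N`. -/
def weakLE (M N : Matroid α) : Prop := M.E = N.E ∧ ∀ B, M.IsBase B → N.IsBase B

namespace Matroid

variable {M : Matroid α} {U : Set α}

lemma con_eq_contract (M : Matroid α) (U : Set α) : M.con U = M ／ U := rfl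

lemma erank_eq_eRank (M : Matroid α) : M.erank = M.eRank := by
  simp only [Matroid.erank, Matroid.eRank, iSup_subtype', Set.mem_ofPred_eq]

section Split

variable {P Q F : Matroid α}

lemma restrict_eq_of_forall_isBase
    (hunion : ∀ B₁ B₂, P.IsBase B₁ → Q.IsBase B₂ → F.IsBase (B₁ ∪ B₂))
    (hinter : ∀ B, F.IsBase B → P.Indep (B ∩ P.E)) : F ↾ P.E = P := by
  refine ext_indep rfl fun I hI => ⟨fun ⟨hIF, hIP⟩ => ?_, fun hIP => ?_⟩
  · obtain ⟨B, hB, hIB⟩ := hIF.exists_isBase_superset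
    exact (hinter B hB).subset (subset_inter hIB hIP)
  · obtain ⟨B₁, hB₁, hIB₁⟩ := hIP.exists_isBase_superset
    obtain ⟨B₂, hB₂⟩ := Q.exists_isBase
    exact ⟨(hunion B₁ B₂ hB₁ hB₂).indep.subset (hIB₁.trans subset_union_left), hI⟩

lemma contract_eq_of_forall_isBase (hPQ : Disjoint P.E Q.E) (hE : F.E = P.E ∪ Q.E)
    (hunion : ∀ B₁ B₂, P.IsBase B₁ → Q.IsBase B₂ → F.IsBase (B₁ ∪ B₂))
    (hinter : ∀ B, F.IsBase B → Q.Spanning (B ∩ Q.E)) : F ／ P.E = Q := by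
  have hground : (F ／ P.E).E = Q.E := by
    rw [contract_ground, hE, union_sdiff_left, hPQ.symm.sdiff_eq_left]
  refine ext_spanning hground fun X hX => ?_
  have hXQ : X ⊆ Q.E := hground ▸ hX
  rw [contract_spanning_iff (hE ▸ subset_union_left),
    and_iff_left (hPQ.symm.mono_left hXQ)]
  constructor
  · intro hXP
    obtain ⟨B, hB, hBX⟩ := hXP.exists_isBase_subset
    exact (hinter B hB).superset (by tauto_set) hXQ
  · intro hX
    obtain ⟨B₂, hB₂, hB₂X⟩ := hX.exists_isBase_subset
    obtain ⟨B₁, hB₁⟩ := P.exists_isBase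
    exact (hunion B₁ B₂ hB₁ hB₂).spanning.superset
      (union_comm X P.E ▸ union_subset_union hB₁.subset_ground hB₂X)
      (hE ▸ union_subset (hXQ.trans subset_union_right) subset_union_left)

lemma isBase_disjointSum_union (hPQ : Disjoint P.E Q.E) {B₁ B₂ : Set α}
    (hB₁ : P.IsBase B₁) (hB₂ : Q.IsBase B₂) : (P.disjointSum Q hPQ).IsBase (B₁ ∪ B₂) := by
  have h₁ := hB₁.subset_ground
  have h₂ := hB₂.subset_ground
  rw [disjointSum_isBase_iff, show (B₁ ∪ B₂) ∩ P.E = B₁ by tauto_set,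
    show (B₁ ∪ B₂) ∩ Q.E = B₂ by tauto_set]
  exact ⟨hB₁, hB₂, union_subset_union h₁ h₂⟩

lemma disjointSum_restrict_eq (hPQ : Disjoint P.E Q.E) : P.disjointSum Q hPQ ↾ P.E = P :=
  restrict_eq_of_forall_isBase (fun _ _ => isBase_disjointSum_union hPQ)
    fun _ hB => (disjointSum_isBase_iff.1 hB).1.indep

lemma disjointSum_contract_eq (hPQ : Disjoint P.E Q.E) : P.disjointSum Q hPQ ／ P.E = Q :=
  contract_eq_of_forall_isBase hPQ disjointSum_ground_eq
    (fun _ _ => isBase_disjointSum_union hPQ)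
    fun _ hB => (disjointSum_isBase_iff.1 hB).2.1.spanning

end Split

lemma isBase_union_of_isBase_restrict_of_isBase_contract (hU : U ⊆ M.E) {B₁ B₂ : Set α}
    (hB₁ : (M ↾ U).IsBase B₁) (hB₂ : (M ／ U).IsBase B₂) : M.IsBase (B₁ ∪ B₂) := by
  rw [isBase_restrict_iff hU] at hB₁
  have hind : M.Indep (B₂ ∪ B₁) := (hB₁.contract_indep_iff.1 hB₂.indep).1
  have hspan : M.Spanning (B₂ ∪ U) := ((contract_spanning_iff hU).1 hB₂.spanning).1
  rw [union_comm]
  refine hind.isBase_of_spanning ?_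
  rw [spanning_iff_closure_eq hind.subset_ground,
    closure_union_congr_right hB₁.closure_eq_closure]
  exact hspan.closure_eq

lemma eRank_restrict_add_eRank_contract (hU : U ⊆ M.E) :
    (M ↾ U).eRank + (M ／ U).eRank = M.eRank := by
  obtain ⟨B₁, hB₁⟩ := (M ↾ U).exists_isBase
  obtain ⟨B₂, hB₂⟩ := (M ／ U).exists_isBase
  have hdisj : Disjoint B₁ B₂ :=
    disjoint_sdiff_right.mono hB₁.subset_ground hB₂.subset_ground
  rw [← hB₁.encard_eq_eRank, ← hB₂.encard_eq_eRank, ← encard_union_eq hdisj,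
    (isBase_union_of_isBase_restrict_of_isBase_contract hU hB₁ hB₂).encard_eq_eRank]

lemma weakLE_disjointSum_restrict_contract (hU : U ⊆ M.E) (h : Disjoint (M ↾ U).E (M ／ U).E) :
    weakLE ((M ↾ U).disjointSum (M ／ U) h) M := by
  refine ⟨by simp [union_sdiff_cancel hU], fun B hB => ?_⟩
  obtain ⟨B₁, B₂, hB₁, hB₂, -, rfl⟩ := hB.eq_union_image_of_disjointSum
  exact isBase_union_of_isBase_restrict_of_isBase_contract hU hB₁ hB₂

end Matroid

namespace weakLE

variable {M₁ M M₂ : Matroid α} {U : Set α}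

lemma indep (h : weakLE M₁ M₂) {I : Set α} (hI : M₁.Indep I) : M₂.Indep I := by
  obtain ⟨B, hB, hIB⟩ := hI.exists_isBase_superset
  exact (h.2 B hB).indep.subset hIB

lemma spanning (h : weakLE M₁ M₂) {X : Set α} (hX : M₁.Spanning X) : M₂.Spanning X := by
  obtain ⟨B, hB, hBX⟩ := hX.exists_isBase_subset
  exact (h.2 B hB).spanning.superset hBX (h.1 ▸ hX.subset_ground)

lemma restrict_eq_of_restrict_eq (h₁ : weakLE M₁ M) (h₂ : weakLE M M₂)
    (h : M₁ ↾ U = M₂ ↾ U) : M ↾ U = M₁ ↾ U := by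
  refine ext_indep rfl fun I _ => ⟨fun hI => ?_, fun hI => ?_⟩
  · rw [restrict_indep_iff] at hI
    rw [h, restrict_indep_iff]
    exact ⟨h₂.indep hI.1, hI.2⟩
  · rw [restrict_indep_iff] at hI ⊢
    exact ⟨h₁.indep hI.1, hI.2⟩

lemma contract_eq_of_contract_eq (h₁ : weakLE M₁ M) (h₂ : weakLE M M₂)
    (h : M₁ ／ U = M₂ ／ U) : M ／ U = M₁ ／ U := by
  refine ext_spanning (by rw [contract_ground, contract_ground, h₁.1])
    fun X _ => ⟨fun hX => ?_, fun hX => ?_⟩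
  · rw [contract_spanning_iff'] at hX
    rw [h, contract_spanning_iff', ← h₂.1]
    exact ⟨h₂.spanning hX.1, hX.2⟩
  · rw [contract_spanning_iff'] at hX ⊢
    rw [← h₁.1]
    exact ⟨h₁.spanning hX.1, hX.2⟩

end weakLE

namespace IsFreeProduct

variable {P Q F M : Matroid α} {U : Set α}

lemma isBase_union (hF : IsFreeProduct P Q F) (hPQ : Disjoint P.E Q.E) {B₁ B₂ : Set α}
    (hB₁ : P.IsBase B₁) (hB₂ : Q.IsBase B₂) : F.IsBase (B₁ ∪ B₂) := by
  have h₁ := hB₁.subset_ground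
  have h₂ := hB₂.subset_ground
  rw [hF.2, show (B₁ ∪ B₂) ∩ P.E = B₁ by tauto_set, show (B₁ ∪ B₂) ∩ Q.E = B₂ by tauto_set,
    encard_union_eq (hPQ.mono h₁ h₂), erank_eq_eRank, erank_eq_eRank, hB₁.encard_eq_eRank,
    hB₂.encard_eq_eRank]
  exact ⟨union_subset_union h₁ h₂, rfl, hB₁.indep, hB₂.spanning⟩

lemma restrict_eq (hF : IsFreeProduct P Q F) (hPQ : Disjoint P.E Q.E) : F ↾ P.E = P :=
  restrict_eq_of_forall_isBase (fun _ _ => hF.isBase_union hPQ)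
    fun B hB => ((hF.2 B).1 hB).2.2.1

lemma contract_eq (hF : IsFreeProduct P Q F) (hPQ : Disjoint P.E Q.E) : F ／ P.E = Q :=
  contract_eq_of_forall_isBase hPQ hF.1 (fun _ _ => hF.isBase_union hPQ)
    fun B hB => ((hF.2 B).1 hB).2.2.2

lemma weakLE_of_restrict_contract (hU : U ⊆ M.E) (hF : IsFreeProduct (M ↾ U) (M ／ U) F) :
    weakLE M F := by
  have hground : (M ↾ U).E ∪ (M ／ U).E = M.E := union_sdiff_cancel hU
  refine ⟨(hF.1.trans hground).symm, fun B hB => (hF.2 B).2 ⟨?_, ?_, ?_, ?_⟩⟩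
  · exact hground ▸ hB.subset_ground
  · rw [erank_eq_eRank, erank_eq_eRank, eRank_restrict_add_eRank_contract hU,
      hB.encard_eq_eRank]
  · exact restrict_indep_iff.2 ⟨hB.indep.inter_right U, inter_subset_right⟩
  · have hBE := hB.subset_ground
    rw [contract_ground, contract_spanning_iff hU]
    exact ⟨hB.spanning.superset (by tauto_set) (union_subset (by tauto_set) hU),
      disjoint_sdiff_left.mono_left inter_subset_right⟩

end IsFreeProduct

theorem phiU_eq_iff_interval_general (S U V : Set α) (hUV : U ∪ V = S)
    (P Q M : Matroid α) (hP : P.E = U) (hM : M.E = S)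
    (hdPQ : Disjoint P.E Q.E) (F : Matroid α) (hF : IsFreeProduct P Q F) :
    IsFreeProduct (M ↾ U) (M.con U) F ↔
      (weakLE (P.disjointSum Q hdPQ) M ∧ weakLE M F) := by
  subst hM
  have hU : U ⊆ M.E := hUV ▸ subset_union_left
  rw [con_eq_contract]
  constructor
  · intro h
    have hdis : Disjoint (M ↾ U).E (M ／ U).E := disjoint_sdiff_right
    have hPU : P = M ↾ U := by rw [← hF.restrict_eq hdPQ, hP]; exact h.restrict_eq hdis
    have hQU : Q = M ／ U := by rw [← hF.contract_eq hdPQ, hP]; exact h.contract_eq hdis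
    subst hPU hQU
    exact ⟨weakLE_disjointSum_restrict_contract hU hdPQ, h.weakLE_of_restrict_contract hU⟩
  · rintro ⟨h₁, h₂⟩
    have hPU : M ↾ U = P := by
      have hsum : P.disjointSum Q hdPQ ↾ U = P := hP ▸ disjointSum_restrict_eq hdPQ
      have hfree : F ↾ U = P := hP ▸ hF.restrict_eq hdPQ
      rw [h₁.restrict_eq_of_restrict_eq h₂ (hsum.trans hfree.symm), hsum]
    have hQU : M ／ U = Q := by
      have hsum : P.disjointSum Q hdPQ ／ U = Q := hP ▸ disjointSum_contract_eq hdPQ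
      have hfree : F ／ U = Q := hP ▸ hF.contract_eq hdPQ
      rw [h₁.contract_eq_of_contract_eq h₂ (hsum.trans hfree.symm), hsum]
    rwa [hPU, hQU]

/-- let `S = U + V` be a partition of a finite set.  For matroids `P` on `U`,
`Q` on `V` and `M` on `S`, one has `φ_U(M) = P □ Q` if and only if
`P ⊕ Q ≤ M ≤ P □ Q` in the rank-preserving weak order, where `φ_U(M) = M|U □ M/U`. -/
theorem phiU_eq_iff_interval (S U V : Set α) (hS : S.Finite) (hUV : U ∪ V = S)
    (hd : Disjoint U V) (P Q M : Matroid α) (hP : P.E = U) (hQ : Q.E = V) (hM : M.E = S)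
    (hdPQ : Disjoint P.E Q.E) (F : Matroid α) (hF : IsFreeProduct P Q F) :
    IsFreeProduct (M ↾ U) (M.con U) F ↔
      (weakLE (P.disjointSum Q hdPQ) M ∧ weakLE M F) :=
  phiU_eq_iff_interval_general S U V hUV P Q M hP hM hdPQ F hF
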